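/- For every fuse-k-expression φ there exists a glue-k-expression ξ whose value G^ξ is label-preservingly isomorphic to the value G^φ of φ. -/

import Mathlib

/-! ### `k`-labeled graphs and the basic operations on them -/

/-- A `k`-labeled graph: a simple graph together with a labeling of its vertices
by labels from `Fin k`. -/
structure LGraph (k : ℕ) where
  V : Type
  G : SimpleGraph V
  lab : V → Fin k

namespace LGraph

variable {k : ℕ}

/-- The join operation `η_{a,b}`: add all edges between vertices of label `a`
and vertices of label `b`. -/
def join (a b : Fin k) (H : LGraph k) : LGraph k where
  V := H.V
  G :=
    { Adj := fun u v =>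
        H.G.Adj u v ∨ (u ≠ v ∧ ((H.lab u = a ∧ H.lab v = b) ∨ (H.lab u = b ∧ H.lab v = a)))
      symm := by
        refine ⟨?_⟩
        intro u v h
        rcases h with h | ⟨hne, h⟩
        · exact Or.inl (h.symm)
        · refine Or.inr ⟨hne.symm, ?_⟩
          rcases h with ⟨h1, h2⟩ | ⟨h1, h2⟩
          · exact Or.inr ⟨h2, h1⟩
          · exact Or.inl ⟨h2, h1⟩
      loopless := by
        refine ⟨?_⟩
        intro v h
        rcases h with h | ⟨hne, _⟩
        · exact H.G.loopless.irrefl v h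
        · exact hne rfl }
  lab := H.lab

/-- The relabel operation `ρ_{a→b}`: every vertex of label `a` gets label `b` instead. -/
def relabel (a b : Fin k) (H : LGraph k) : LGraph k where
  V := H.V
  G := H.G
  lab := fun v => if H.lab v = a then b else H.lab v

/-- The fuse operation `θ_i`: replace all vertices of label `i` by a single new vertex
(represented by `none`) of label `i` whose neighbourhood is the union of their
neighbourhoods. -/
def fuse (i : Fin k) (H : LGraph k) : LGraph k where
  V := Option {v : H.V // H.lab v ≠ i}
  G :=
    { Adj := fun x y =>
        match x, y with
        | some u, some v => H.G.Adj u.1 v.1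
        | some u, none => ∃ w, H.lab w = i ∧ H.G.Adj u.1 w
        | none, some v => ∃ w, H.lab w = i ∧ H.G.Adj w v.1
        | none, none => False
      symm := by
        refine ⟨?_⟩
        rintro (_ | u) (_ | v) h
        · exact h
        · obtain ⟨w, hw, ha⟩ := h
          exact ⟨w, hw, ha.symm⟩
        · obtain ⟨w, hw, ha⟩ := h
          exact ⟨w, hw, ha.symm⟩
        · exact h.symm
      loopless := by
        refine ⟨?_⟩
        rintro (_ | v) h
        · exact h
        · exact H.G.loopless.irrefl v.1 h }
  lab := fun x =>
    match x with
    | some u => H.lab u.1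
    | none => i

/-- Disjoint union `H1 ⊕ H2` of two `k`-labeled graphs. -/
def union (H1 H2 : LGraph k) : LGraph k where
  V := H1.V ⊕ H2.V
  G := H1.G ⊕g H2.G
  lab := Sum.elim H1.lab H2.lab

/-- Label-preserving isomorphism of `k`-labeled graphs. -/
def LIso (H1 H2 : LGraph k) : Prop :=
  ∃ e : H1.G ≃g H2.G, ∀ v, H2.lab (e v) = H1.lab v

/-- The occurrence of the join operator `η_{a,b}` applied to `H` is not useless,
i.e. it creates at least one new edge. -/
def joinUseful (a b : Fin k) (H : LGraph k) : Prop :=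
  ∃ u v : H.V, u ≠ v ∧ H.lab u = a ∧ H.lab v = b ∧ ¬ H.G.Adj u v

/-- The occurrence of the fuse operator `θ_i` applied to `H` is not useless,
i.e. `H` has at least two vertices of label `i`. -/
def fuseUseful (i : Fin k) (H : LGraph k) : Prop :=
  ∃ u v : H.V, u ≠ v ∧ H.lab u = i ∧ H.lab v = i

/-- The occurrence of a relabel operator `ρ_{a→b}` applied to `H` is not useless,
i.e. `H` has a vertex of label `a`. -/
def relabelUseful (a : Fin k) (H : LGraph k) : Prop :=
  ∃ v : H.V, H.lab v = a

/-- `relabelSeq i [a₁, …, a_q] H = ρ_{a₁→i}(⋯(ρ_{a_q→i}(H))⋯)`. -/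
def relabelSeq (i : Fin k) : List (Fin k) → LGraph k → LGraph k
  | [], H => H
  | a :: as, H => relabel a i (relabelSeq i as H)

/-- None of the relabel operators in `relabelSeq i as H` is useless (this includes
that none of them has the form `ρ_{a→a}`). -/
def relabelSeqUseful (i : Fin k) : List (Fin k) → LGraph k → Prop
  | [], _ => True
  | a :: as, H => relabelSeqUseful i as H ∧ a ≠ i ∧ relabelUseful a (relabelSeq i as H)

end LGraph

/-! ### Fuse-`k`-expressions -/

/-- A fuse-`k`-expression: introduce a vertex, disjoint union, join, relabel, fuse. -/
inductive FuseExpr (k : ℕ) where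
  | intro (i : Fin k)
  | union (φ1 φ2 : FuseExpr k)
  | join (i j : Fin k) (φ : FuseExpr k)
  | relabel (i j : Fin k) (φ : FuseExpr k)
  | fuse (i : Fin k) (φ : FuseExpr k)

namespace FuseExpr

variable {k : ℕ}

/-- The single-vertex `k`-labeled graph with label `i`. -/
def singleVertex (i : Fin k) : LGraph k := ⟨PUnit, ⊥, fun _ => i⟩

/-- The `k`-labeled graph `G^φ` obtained by evaluating a fuse-`k`-expression. -/
def eval : FuseExpr k → LGraph k
  | .intro i => singleVertex i
  | .union φ1 φ2 => LGraph.union φ1.eval φ2.eval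
  | .join i j φ => LGraph.join i j φ.eval
  | .relabel i j φ => LGraph.relabel i j φ.eval
  | .fuse i φ => LGraph.fuse i φ.eval

/-- Well-formedness of a fuse-`k`-expression: joins and relabels use two distinct labels,
and every fuse `θ_i` is applied to a graph having a vertex of label `i`. -/
def WF : FuseExpr k → Prop
  | .intro _ => True
  | .union φ1 φ2 => φ1.WF ∧ φ2.WF
  | .join i j φ => i ≠ j ∧ φ.WF
  | .relabel i j φ => i ≠ j ∧ φ.WF
  | .fuse i φ => φ.WF ∧ ∃ v, φ.eval.lab v = i

end FuseExpr

/-- A graph `G` admits a fuse-`k`-expression if some well-formed fuse-`k`-expression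
evaluates to a labeled graph whose underlying simple graph is isomorphic to `G`. -/
def FuseAdmits {V : Type} (k : ℕ) (G : SimpleGraph V) : Prop :=
  ∃ φ : FuseExpr k, φ.WF ∧ Nonempty (φ.eval.G ≃g G)

/-! ### Glue-`k`-expressions -/

/-- A `k`-labeled graph with titled vertices: vertices are natural-number titles
(titles determine vertex identity), together with a finite vertex set, a finite edge
set and a labeling (only meaningful on `verts`). -/
structure TGraph (k : ℕ) where
  verts : Finset ℕ
  edges : Finset (Sym2 ℕ)
  lab : ℕ → Fin k

/-- The underlying simple graph (on the vertex set) of a titled `k`-labeled graph. -/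
def TGraph.toSG {k : ℕ} (T : TGraph k) : SimpleGraph {v // v ∈ T.verts} where
  Adj u v := u ≠ v ∧ s(u.1, v.1) ∈ T.edges
  symm := by
    refine ⟨?_⟩
    intro u v h
    refine ⟨h.1.symm, ?_⟩
    rw [Sym2.eq_swap]
    exact h.2
  loopless := ⟨fun v h => h.1 rfl⟩

/-- Two titled `k`-labeled graphs are glueable: every shared vertex has the same label
in both graphs and is the unique vertex of its label in each of them. -/
def Glueable {k : ℕ} (T1 T2 : TGraph k) : Prop :=
  ∀ v ∈ T1.verts ∩ T2.verts,
    T1.lab v = T2.lab v ∧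
    (∀ w ∈ T1.verts, T1.lab w = T1.lab v → w = v) ∧
    (∀ w ∈ T2.verts, T2.lab w = T2.lab v → w = v)

/-- A glue-`k`-expression: introduce a titled vertex, join, relabel, glue. -/
inductive GlueExpr (k : ℕ) where
  | intro (v : ℕ) (i : Fin k)
  | join (i j : Fin k) (ξ : GlueExpr k)
  | relabel (i j : Fin k) (ξ : GlueExpr k)
  | glue (ξ1 ξ2 : GlueExpr k)

namespace GlueExpr

variable {k : ℕ}

/-- The titled `k`-labeled graph `G^ξ` obtained by evaluating a glue-`k`-expression. -/
def eval : GlueExpr k → TGraph k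
  | .intro v i => ⟨{v}, ∅, fun _ => i⟩
  | .join i j ξ =>
      let T := ξ.eval
      ⟨T.verts,
       T.edges ∪
         (((T.verts ×ˢ T.verts).filter
            (fun p => p.1 ≠ p.2 ∧ T.lab p.1 = i ∧ T.lab p.2 = j)).image
            (fun p => s(p.1, p.2))),
       T.lab⟩
  | .relabel i j ξ =>
      let T := ξ.eval
      ⟨T.verts, T.edges, fun v => if T.lab v = i then j else T.lab v⟩
  | .glue ξ1 ξ2 =>
      let T1 := ξ1.eval
      let T2 := ξ2.eval
      ⟨T1.verts ∪ T2.verts, T1.edges ∪ T2.edges,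
       fun v => if v ∈ T1.verts then T1.lab v else T2.lab v⟩

/-- Well-formedness of a glue-`k`-expression: joins and relabels use two distinct
labels, and every glue node is applied to two glueable graphs. -/
def WF : GlueExpr k → Prop
  | .intro _ _ => True
  | .join i j ξ => i ≠ j ∧ ξ.WF
  | .relabel i j ξ => i ≠ j ∧ ξ.WF
  | .glue ξ1 ξ2 => ξ1.WF ∧ ξ2.WF ∧ Glueable ξ1.eval ξ2.eval

/-- A glue-`k`-expression is *reduced* if it contains no useless nodes and moreover:
(1) no join `η_{i,j}` is applied to a graph already containing an edge between a
vertex of label `i` and a vertex of label `j`; (2) the two graphs at every glue node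
are edge-disjoint; (3) every shared vertex at a glue node has an incident edge in both
glued graphs. -/
def Reduced : GlueExpr k → Prop
  | .intro _ _ => True
  | .join i j ξ => ξ.Reduced ∧
      -- the join is not useless: it creates at least one new edge
      (∃ u ∈ ξ.eval.verts, ∃ v ∈ ξ.eval.verts,
        u ≠ v ∧ ξ.eval.lab u = i ∧ ξ.eval.lab v = j ∧ s(u, v) ∉ ξ.eval.edges) ∧
      -- property (1): no already existing edge between labels `i` and `j`
      (∀ u ∈ ξ.eval.verts, ∀ v ∈ ξ.eval.verts,
        ξ.eval.lab u = i → ξ.eval.lab v = j → s(u, v) ∉ ξ.eval.edges)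
  | .relabel i _ ξ => ξ.Reduced ∧
      -- the relabel is not useless: some vertex has label `i`
      (∃ v ∈ ξ.eval.verts, ξ.eval.lab v = i)
  | .glue ξ1 ξ2 => ξ1.Reduced ∧ ξ2.Reduced ∧
      -- property (2): the glued graphs are edge-disjoint
      ξ1.eval.edges ∩ ξ2.eval.edges = ∅ ∧
      -- property (3): every shared vertex has an incident edge on both sides
      (∀ v ∈ ξ1.eval.verts ∩ ξ2.eval.verts,
        (∃ e ∈ ξ1.eval.edges, v ∈ e) ∧ (∃ e ∈ ξ2.eval.edges, v ∈ e))

/-- The number of leaves (introduce nodes) of a glue-`k`-expression. -/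
def leafCount : GlueExpr k → ℕ
  | .intro _ _ => 1
  | .join _ _ ξ => ξ.leafCount
  | .relabel _ _ ξ => ξ.leafCount
  | .glue ξ1 ξ2 => ξ1.leafCount + ξ2.leafCount

/-- The number of nodes of the parse tree of a glue-`k`-expression. -/
def nodeCount : GlueExpr k → ℕ
  | .intro _ _ => 1
  | .join _ _ ξ => ξ.nodeCount + 1
  | .relabel _ _ ξ => ξ.nodeCount + 1
  | .glue ξ1 ξ2 => ξ1.nodeCount + ξ2.nodeCount + 1

end GlueExpr

/-- A titled `k`-labeled graph is label-preservingly isomorphic to a `k`-labeled graph. -/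
def TGraph.LIsoTo {k : ℕ} (T : TGraph k) (H : LGraph k) : Prop :=
  ∃ e : T.toSG ≃g H.G, ∀ v, H.lab (e v) = T.lab v.1

/-! The glue-expression is built by induction on `φ`, carrying out every fuse in advance: all
vertices that a later `θ_i` will merge get the same title from the start, so that a disjoint
union becomes a glue along these shared titles. A shared title carries, on each side, the only
label of its future fuse class, which makes the two sides glueable once one side has been
relabelled to agree with the other on the labels of the shared titles. -/

open Function SimpleGraph

theorem Function.eq_iff_and_apply_eq_of_update_eq {α β : Type*} [DecidableEq α]
    {f : α → Option β} {j x y : α} {b : β} (hj : f j = none) (hb : ∀ x, f x ≠ some b)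
    (h : update f j (some b) x = update f j (some b) y) : (x = j ↔ y = j) ∧ f x = f y := by
  by_cases hx : x = j <;> by_cases hy : y = j
  · subst hx hy
    exact ⟨Iff.rfl, rfl⟩
  · rw [hx, update_self, update_of_ne hy] at h
    exact absurd h.symm (hb y)
  · rw [hy, update_self, update_of_ne hx] at h
    exact absurd h (hb x)
  · rw [update_of_ne hx, update_of_ne hy] at h
    exact ⟨iff_of_false hx hy, h⟩

namespace SimpleGraph

variable {V W X : Type*}

theorem map_sup (f : V → W) (G₁ G₂ : SimpleGraph V) :
    (G₁ ⊔ G₂).map f = G₁.map f ⊔ G₂.map f := by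
  ext x y
  simp only [map_adj', sup_adj]
  grind

theorem map_sum_elim (f : V → X) (g : W → X) (G₁ : SimpleGraph V) (G₂ : SimpleGraph W) :
    (G₁ ⊕g G₂).map (Sum.elim f g) = G₁.map f ⊔ G₂.map g := by
  ext x y
  simp only [map_adj', sup_adj, Sum.exists, sum_adj_inl, sum_adj_inr, Sum.elim_inl,
    Sum.elim_inr]
  grind [not_adj_sum_inl_inr, SimpleGraph.Adj.symm]

theorem map_fromRel (f : V → W) (r : V → V → Prop) :
    (fromRel r).map f = fromRel (Relation.Map r f f) := by
  ext x y
  simp only [map_adj', fromRel_adj, Relation.Map]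
  grind

end SimpleGraph

namespace LGraph

variable {k : ℕ}

theorem join_G (a b : Fin k) (H : LGraph k) :
    (H.join a b).G = H.G ⊔ fromRel fun u v => H.lab u = a ∧ H.lab v = b := by
  ext u v
  exact or_congr_right (and_congr_right fun _ => or_congr_right and_comm)

theorem map_join_G {W : Type*} (a b : Fin k) (H : LGraph k) (f : H.V → W) :
    (H.join a b).G.map f =
      H.G.map f ⊔ fromRel (Relation.Map (fun u v => H.lab u = a ∧ H.lab v = b) f f) := by
  calc (H.join a b).G.map f = (H.G ⊔ fromRel fun u v => H.lab u = a ∧ H.lab v = b).map f :=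
        congrArg _ (join_G a b H)
    _ = _ := by rw [SimpleGraph.map_sup, map_fromRel]

def fuseMap (i : Fin k) (H : LGraph k) (v : H.V) : Option {v : H.V // H.lab v ≠ i} :=
  if h : H.lab v = i then none else some ⟨v, h⟩

variable {i : Fin k} {H : LGraph k}

@[simp]
theorem fuseMap_eq_none {v : H.V} : H.fuseMap i v = none ↔ H.lab v = i := by
  unfold fuseMap
  split <;> simp_all

@[simp]
theorem fuseMap_eq_some {v : H.V} {u : {v : H.V // H.lab v ≠ i}} :
    H.fuseMap i v = some u ↔ v = u.1 := by
  unfold fuseMap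
  split
  · simp only [reduceCtorEq, false_iff]
    rintro rfl
    exact u.2 ‹_›
  · rw [Option.some_inj, Subtype.ext_iff]

theorem lab_fuseMap (v : H.V) : (H.fuse i).lab (H.fuseMap i v) = H.lab v := by
  unfold fuseMap
  split
  · exact ‹H.lab v = i›.symm
  · rfl

theorem fuseMap_surjective (hi : ∃ v, H.lab v = i) : Surjective (H.fuseMap i) := by
  rintro (_ | u)
  · exact hi.imp fun v hv => fuseMap_eq_none.2 hv
  · exact ⟨u.1, fuseMap_eq_some.2 rfl⟩

theorem fuse_G : (H.fuse i).G = H.G.map (H.fuseMap i) := by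
  ext x y
  change _ ↔ x ≠ y ∧ ∃ u v, H.G.Adj u v ∧ H.fuseMap i u = x ∧ H.fuseMap i v = y
  rcases x with _ | u <;> rcases y with _ | v <;> simp [fuse, and_comm]
  exact fun h huv => h.ne (congrArg Subtype.val huv)

theorem eq_of_fuse_lab_eq {x y : (H.fuse i).V} (hx : (H.fuse i).lab x = i)
    (hy : (H.fuse i).lab y = i) : x = y := by
  rcases x with _ | u
  · rcases y with _ | v
    · rfl
    · exact absurd hy v.2
  · exact absurd hx u.2

end LGraph

def TGraph.graph {k : ℕ} (T : TGraph k) : SimpleGraph ℕ := fromEdgeSet T.edges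

theorem TGraph.toSG_adj_iff {k : ℕ} {T : TGraph k} {x y : {v // v ∈ T.verts}} :
    T.toSG.Adj x y ↔ T.graph.Adj x y :=
  ⟨fun h => ⟨h.2, fun e => h.1 (Subtype.ext e)⟩,
    fun h => ⟨fun e => h.2 (congrArg Subtype.val e), h.1⟩⟩

namespace GlueExpr

variable {k : ℕ}

theorem graph_eval_intro (v : ℕ) (i : Fin k) : (intro v i).eval.graph = ⊥ := by
  simp [eval, TGraph.graph]

theorem graph_eval_join (i j : Fin k) (ξ : GlueExpr k) :
    (join i j ξ).eval.graph = ξ.eval.graph ⊔ fromRel fun p q =>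
      (p ∈ ξ.eval.verts ∧ ξ.eval.lab p = i) ∧ (q ∈ ξ.eval.verts ∧ ξ.eval.lab q = j) := by
  ext x y
  simp only [TGraph.graph, eval, Finset.coe_union, Finset.coe_image, Finset.coe_filter,
    Finset.mem_product, fromEdgeSet_union, sup_adj, fromEdgeSet_adj, SetLike.mem_coe,
    Set.mem_image, Set.mem_ofPred_eq, Sym2.eq, Sym2.rel_iff', Prod.exists, Prod.mk.injEq,
    fromRel_adj]
  grind

theorem graph_eval_glue (ξ₁ ξ₂ : GlueExpr k) :
    (glue ξ₁ ξ₂).eval.graph = ξ₁.eval.graph ⊔ ξ₂.eval.graph := by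
  simp [eval, TGraph.graph]

theorem lab_eval_glue_of_mem_left {ξ₁ ξ₂ : GlueExpr k} {x : ℕ} (hx : x ∈ ξ₁.eval.verts) :
    (glue ξ₁ ξ₂).eval.lab x = ξ₁.eval.lab x :=
  if_pos hx

theorem lab_eval_glue_of_mem_right {ξ₁ ξ₂ : GlueExpr k} (hg : Glueable ξ₁.eval ξ₂.eval) {x : ℕ}
    (hx : x ∈ ξ₂.eval.verts) : (glue ξ₁ ξ₂).eval.lab x = ξ₂.eval.lab x := by
  by_cases hx₁ : x ∈ ξ₁.eval.verts
  · exact (if_pos hx₁).trans (hg x (Finset.mem_inter.2 ⟨hx₁, hx⟩)).1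
  · exact if_neg hx₁

/-- `ξ` builds `H` with the pending fuses already carried out: the vertices of every label `x`
with `pend x = some t` form one vertex of `ξ`, titled `t` and labelled by some `y` with
`pend y = some t`; the other vertices keep their labels and are titled injectively by `R`, with
titles at least `n`, above every pending title. -/
structure Realizes (ξ : GlueExpr k) (H : LGraph k) (pend : Fin k → Option ℕ) (n : ℕ)
    (R : H.V → ℕ) : Prop where
  wf : ξ.WF
  coe_verts : (ξ.eval.verts : Set ℕ) = Set.range R
  graph_eq : ξ.eval.graph = H.G.map R
  pend_lab : ∀ v, pend (ξ.eval.lab (R v)) = pend (H.lab v)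
  lab_of_pend_eq_none : ∀ v, pend (H.lab v) = none → ξ.eval.lab (R v) = H.lab v
  title_of_pend : ∀ v t, pend (H.lab v) = some t → R v = t
  pend_lt : ∀ x t, pend x = some t → t < n
  le_title : ∀ v, pend (H.lab v) = none → n ≤ R v
  injOn : ∀ v w, pend (H.lab v) = none → pend (H.lab w) = none → R v = R w → v = w

namespace Realizes

variable {ξ ξ' : GlueExpr k} {H : LGraph k} {pend : Fin k → Option ℕ} {n : ℕ} {R : H.V → ℕ}

theorem mem_verts_iff (h : Realizes ξ H pend n R) {x : ℕ} :
    x ∈ ξ.eval.verts ↔ ∃ v, R v = x := by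
  rw [← Finset.mem_coe, h.coe_verts, Set.mem_range]

theorem title_mem (h : Realizes ξ H pend n R) (v : H.V) : R v ∈ ξ.eval.verts :=
  h.mem_verts_iff.2 ⟨v, rfl⟩

theorem verts_eq {pend' : Fin k → Option ℕ} {n' : ℕ} (h : Realizes ξ H pend n R)
    (h' : Realizes ξ' H pend' n' R) : ξ'.eval.verts = ξ.eval.verts :=
  Finset.coe_injective (h'.coe_verts.trans h.coe_verts.symm)

theorem pend_lab_of_title_lt (h : Realizes ξ H pend n R) {v : H.V} (hv : R v < n) :
    pend (H.lab v) = some (R v) := by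
  cases hp : pend (H.lab v) with
  | none => exact absurd (h.le_title v hp) hv.not_ge
  | some t => rw [h.title_of_pend v t hp]

theorem lab_eq_lab_iff (h : Realizes ξ H pend n R) {v w : H.V} :
    ξ.eval.lab (R v) = ξ.eval.lab (R w) ↔ H.lab v = H.lab w ∨ R v = R w := by
  constructor
  · intro hlab
    have hp : pend (H.lab v) = pend (H.lab w) := by rw [← h.pend_lab, hlab, h.pend_lab]
    cases hv : pend (H.lab v) with
    | none =>
      left
      rw [← h.lab_of_pend_eq_none v hv, hlab, h.lab_of_pend_eq_none w (hp ▸ hv)]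
    | some t => exact Or.inr ((h.title_of_pend v t hv).trans (h.title_of_pend w t (hp ▸ hv)).symm)
  · rintro (hlab | hR)
    · cases hv : pend (H.lab v) with
      | none => rw [h.lab_of_pend_eq_none v hv, h.lab_of_pend_eq_none w (hlab ▸ hv), hlab]
      | some t => rw [h.title_of_pend v t hv, h.title_of_pend w t (hlab ▸ hv)]
    · rw [hR]

theorem eq_of_lab_eq (h : Realizes ξ H pend n R) {v : H.V} {t x : ℕ}
    (hv : pend (H.lab v) = some t) (hx : x ∈ ξ.eval.verts)
    (hlab : ξ.eval.lab x = ξ.eval.lab t) : x = t := by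
  obtain ⟨w, rfl⟩ := h.mem_verts_iff.1 hx
  rw [← h.title_of_pend v t hv] at hlab ⊢
  rcases h.lab_eq_lab_iff.1 hlab with hl | hR
  · rw [h.title_of_pend w t (hl ▸ hv), h.title_of_pend v t hv]
  · exact hR

theorem mem_verts_and_lab_eq_iff (h : Realizes ξ H pend n R) {z : H.V} {a : Fin k}
    (hz : H.lab z = a) {x : ℕ} :
    x ∈ ξ.eval.verts ∧ ξ.eval.lab x = ξ.eval.lab (R z) ↔ ∃ u, H.lab u = a ∧ R u = x := by
  constructor
  · rintro ⟨hx, hlab⟩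
    obtain ⟨w, rfl⟩ := h.mem_verts_iff.1 hx
    rcases h.lab_eq_lab_iff.1 hlab with hl | hR
    · exact ⟨w, hl.trans hz, rfl⟩
    · exact ⟨z, hz, hR.symm⟩
  · rintro ⟨u, hu, rfl⟩
    exact ⟨h.title_mem u, h.lab_eq_lab_iff.2 (Or.inl (hu.trans hz.symm))⟩

theorem lIsoTo (h : Realizes ξ H (fun _ => none) n R) : ξ.eval.LIsoTo H := by
  have hinj : Injective R := fun v w => h.injOn v w rfl rfl
  let e : H.V ≃ {x // x ∈ ξ.eval.verts} := Equiv.ofBijective (fun v => ⟨R v, h.title_mem v⟩)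
    ⟨fun v w hvw => hinj (congrArg Subtype.val hvw),
      fun ⟨x, hx⟩ => (h.mem_verts_iff.1 hx).imp fun v hv => Subtype.ext hv⟩
  have hadj : ∀ v w, ξ.eval.toSG.Adj (e v) (e w) ↔ H.G.Adj v w := fun v w => by
    rw [TGraph.toSG_adj_iff, h.graph_eq]
    exact map_adj_apply (f := ⟨R, hinj⟩)
  let f : H.G ≃g ξ.eval.toSG := ⟨e, hadj _ _⟩
  refine ⟨f.symm, fun x => ?_⟩
  obtain ⟨v, rfl⟩ := f.surjective x
  rw [RelIso.symm_apply_apply]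
  exact (h.lab_of_pend_eq_none v rfl).symm

theorem exists_relabel_title (h : Realizes ξ H pend n R) {y : Fin k} {t : ℕ}
    (hy : pend y = some t) :
    ∃ ξ', Realizes ξ' H pend n R ∧ (t ∈ ξ.eval.verts → ξ'.eval.lab t = y) ∧
      ∀ x ∈ ξ.eval.verts, x ≠ t → ξ'.eval.lab x = ξ.eval.lab x := by
  by_cases ht : t ∈ ξ.eval.verts ∧ ξ.eval.lab t ≠ y
  · obtain ⟨ht, hne⟩ := ht
    obtain ⟨v₀, rfl⟩ := h.mem_verts_iff.1 ht
    have hv₀ : pend (H.lab v₀) = some (R v₀) := h.pend_lab_of_title_lt (h.pend_lt y _ hy)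
    have hclass : ∀ x ∈ ξ.eval.verts, ξ.eval.lab x = ξ.eval.lab (R v₀) → x = R v₀ :=
      fun x hx => h.eq_of_lab_eq hv₀ hx
    refine ⟨relabel (ξ.eval.lab (R v₀)) y ξ,
      { h with wf := ⟨hne, h.wf⟩, pend_lab := fun v => ?_, lab_of_pend_eq_none := fun v hv => ?_ },
      fun _ => if_pos rfl, fun x hx hxt => if_neg (mt (hclass x hx) hxt)⟩
    · show pend (if ξ.eval.lab (R v) = ξ.eval.lab (R v₀) then y else ξ.eval.lab (R v)) = _
      split_ifs with hv
      · rw [hy, ← h.pend_lab v, hv, h.pend_lab, hv₀]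
      · exact h.pend_lab v
    · show (if ξ.eval.lab (R v) = ξ.eval.lab (R v₀) then y else ξ.eval.lab (R v)) = _
      split_ifs with hv'
      · rw [← h.pend_lab v, hv', h.pend_lab, hv₀] at hv
        cases hv
      · exact h.lab_of_pend_eq_none v hv
  · rw [not_and_not_right] at ht
    exact ⟨ξ, h, ht, fun _ _ _ => rfl⟩

theorem exists_align (h : Realizes ξ H pend n R) (f : ℕ → Fin k) (s : Finset ℕ)
    (hs : ∀ t ∈ s, pend (f t) = some t) :
    ∃ ξ', Realizes ξ' H pend n R ∧ ∀ t ∈ s, t ∈ ξ.eval.verts → ξ'.eval.lab t = f t := by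
  induction s using Finset.induction_on with
  | empty => exact ⟨ξ, h, by simp⟩
  | insert t s hts ih =>
    obtain ⟨ξ₀, h₀, hξ₀⟩ := ih fun t' ht' => hs t' (Finset.mem_insert_of_mem ht')
    obtain ⟨ξ₁, h₁, hξ₁t, hξ₁⟩ := h₀.exists_relabel_title (hs t (Finset.mem_insert_self t s))
    refine ⟨ξ₁, h₁, fun t' ht' hmem => ?_⟩
    have hmem₀ : t' ∈ ξ₀.eval.verts := h.verts_eq h₀ ▸ hmem
    rcases Finset.mem_insert.1 ht' with rfl | ht'
    · exact hξ₁t hmem₀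
    · rw [hξ₁ t' hmem₀ (ne_of_mem_of_not_mem ht' hts), hξ₀ t' ht' hmem]

section Glue

variable {ξ₁ ξ₂ : GlueExpr k} {H₁ H₂ : LGraph k} {n₂ : ℕ} {R₁ : H₁.V → ℕ} {R₂ : H₂.V → ℕ}

theorem glue (h₁ : Realizes ξ₁ H₁ pend n R₁) (h₂ : Realizes ξ₂ H₂ pend n₂ R₂)
    (hg : Glueable ξ₁.eval ξ₂.eval) (hn : n ≤ n₂) (hsep : ∀ x ∈ ξ₁.eval.verts, x < n₂) :
    Realizes (ξ₁.glue ξ₂) (H₁.union H₂) pend n (Sum.elim R₁ R₂) := by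
  have hlab : ∀ v, (ξ₁.glue ξ₂).eval.lab (Sum.elim R₁ R₂ v) =
      Sum.elim (fun v => ξ₁.eval.lab (R₁ v)) (fun v => ξ₂.eval.lab (R₂ v)) v := by
    rintro (v | v)
    exacts [lab_eval_glue_of_mem_left (h₁.title_mem v),
      lab_eval_glue_of_mem_right hg (h₂.title_mem v)]
  have hne : ∀ v w, pend (H₂.lab w) = none → R₁ v ≠ R₂ w := fun v w hw =>
    ((hsep _ (h₁.title_mem v)).trans_le (h₂.le_title w hw)).ne
  refine ⟨⟨h₁.wf, h₂.wf, hg⟩, ?_, ?_, ?_, ?_, ?_, h₁.pend_lt, ?_, ?_⟩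
  · change ((ξ₁.eval.verts ∪ ξ₂.eval.verts : Finset ℕ) : Set ℕ) = _
    rw [Finset.coe_union, h₁.coe_verts, h₂.coe_verts]
    exact (Set.Sum.elim_range R₁ R₂).symm
  · rw [graph_eval_glue, h₁.graph_eq, h₂.graph_eq]
    exact (map_sum_elim R₁ R₂ H₁.G H₂.G).symm
  · rintro (v | v) <;> rw [hlab]
    exacts [h₁.pend_lab v, h₂.pend_lab v]
  · rintro (v | v) <;> rw [hlab]
    exacts [h₁.lab_of_pend_eq_none v, h₂.lab_of_pend_eq_none v]
  · rintro (v | v)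
    exacts [h₁.title_of_pend v, h₂.title_of_pend v]
  · rintro (v | v) hv
    exacts [h₁.le_title v hv, hn.trans (h₂.le_title v hv)]
  · rintro (v | v) (w | w) hv hw hvw
    · exact congrArg Sum.inl (h₁.injOn v w hv hw hvw)
    · exact absurd hvw (hne v w hw)
    · exact absurd hvw.symm (hne w v hv)
    · exact congrArg Sum.inr (h₂.injOn v w hv hw hvw)

theorem pend_of_mem_inter (h₁ : Realizes ξ₁ H₁ pend n R₁) (h₂ : Realizes ξ₂ H₂ pend n₂ R₂)
    (hsep : ∀ x ∈ ξ₁.eval.verts, x < n₂) {x : ℕ} (hx : x ∈ ξ₁.eval.verts ∩ ξ₂.eval.verts) :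
    (∃ v, R₁ v = x ∧ pend (H₁.lab v) = some x) ∧ (∃ v, R₂ v = x ∧ pend (H₂.lab v) = some x) := by
  rw [Finset.mem_inter] at hx
  obtain ⟨v₂, rfl⟩ := h₂.mem_verts_iff.1 hx.2
  have hv₂ := h₂.pend_lab_of_title_lt (hsep _ hx.1)
  obtain ⟨v₁, hv₁⟩ := h₁.mem_verts_iff.1 hx.1
  refine ⟨⟨v₁, hv₁, ?_⟩, v₂, rfl, hv₂⟩
  rw [← hv₁]
  exact h₁.pend_lab_of_title_lt (hv₁ ▸ h₁.pend_lt _ _ hv₂)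

theorem exists_glue (h₁ : Realizes ξ₁ H₁ pend n R₁) (h₂ : Realizes ξ₂ H₂ pend n₂ R₂)
    (hn : n ≤ n₂) (hsep : ∀ x ∈ ξ₁.eval.verts, x < n₂) :
    ∃ ξ, Realizes ξ (H₁.union H₂) pend n (Sum.elim R₁ R₂) := by
  obtain ⟨ξ₂', h₂', halign⟩ := h₂.exists_align ξ₁.eval.lab (ξ₁.eval.verts ∩ ξ₂.eval.verts)
    fun t ht => by
      obtain ⟨⟨v, rfl, hv⟩, -⟩ := pend_of_mem_inter h₁ h₂ hsep ht
      rw [h₁.pend_lab, hv]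
  have hverts : ξ₂'.eval.verts = ξ₂.eval.verts := h₂.verts_eq h₂'
  refine ⟨_, h₁.glue h₂' (fun x hx => ?_) hn hsep⟩
  rw [hverts] at hx ⊢
  obtain ⟨⟨v₁, -, hv₁⟩, ⟨v₂, -, hv₂⟩⟩ := pend_of_mem_inter h₁ h₂ hsep hx
  have hlab : ξ₂'.eval.lab x = ξ₁.eval.lab x := halign x hx (Finset.mem_inter.1 hx).2
  refine ⟨hlab.symm, fun w hw hw' => h₁.eq_of_lab_eq hv₁ hw hw', fun w hw hw' => ?_⟩
  exact h₂'.eq_of_lab_eq hv₂ (hverts ▸ hw) hw'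

end Glue

theorem exists_join (h : Realizes ξ H pend n R) {a b : Fin k} (hab : a ≠ b) :
    ∃ ξ', Realizes ξ' (H.join a b) pend n R := by
  by_cases hc : ∃ u v, H.lab u = a ∧ H.lab v = b ∧ R u ≠ R v
  · obtain ⟨u₀, v₀, hu₀, hv₀, hne⟩ := hc
    have hne' : ξ.eval.lab (R u₀) ≠ ξ.eval.lab (R v₀) := by
      rw [Ne, h.lab_eq_lab_iff, hu₀, hv₀]
      exact not_or.2 ⟨hab, hne⟩
    refine ⟨join (ξ.eval.lab (R u₀)) (ξ.eval.lab (R v₀)) ξ,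
      { h with wf := ⟨hne', h.wf⟩, graph_eq := ?_ }⟩
    rw [graph_eval_join, h.graph_eq]
    refine Eq.trans ?_ (LGraph.map_join_G a b H R).symm
    congr
    ext x y
    rw [h.mem_verts_and_lab_eq_iff hu₀, h.mem_verts_and_lab_eq_iff hv₀]
    exact ⟨fun ⟨⟨u, hu, hux⟩, v, hv, hvy⟩ => ⟨u, v, ⟨hu, hv⟩, hux, hvy⟩,
      fun ⟨u, v, ⟨hu, hv⟩, hux, hvy⟩ => ⟨⟨u, hu, hux⟩, v, hv, hvy⟩⟩
  · -- every new edge joins two vertices with the same title, so it is a loop in `ξ`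
    simp only [not_exists, not_and, not_not] at hc
    refine ⟨ξ, { h with graph_eq := ?_ }⟩
    refine h.graph_eq.trans ((LGraph.map_join_G a b H R).trans (sup_eq_left.2 ?_)).symm
    rintro x y ⟨hxy, ⟨u, v, ⟨hu, hv⟩, rfl, rfl⟩ | ⟨u, v, ⟨hu, hv⟩, rfl, rfl⟩⟩
    exacts [(hxy (hc u v hu hv)).elim, (hxy (hc u v hu hv).symm).elim]

theorem relabel {a b : Fin k} (h : Realizes ξ H (fun x => pend (if x = a then b else x)) n R)
    (hab : a ≠ b) (hpend : ∀ x t, pend x = some t → t < n) :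
    Realizes (ξ.relabel a b) (H.relabel a b) pend n R where
  wf := ⟨hab, h.wf⟩
  coe_verts := h.coe_verts
  graph_eq := h.graph_eq
  pend_lab := h.pend_lab
  lab_of_pend_eq_none v hv :=
    congrArg (fun x => if x = a then b else x) (h.lab_of_pend_eq_none v hv)
  title_of_pend := h.title_of_pend
  pend_lt := hpend
  le_title := h.le_title
  injOn := h.injOn

theorem of_surjective {H' : LGraph k} (h : Realizes ξ H pend n R) {π : H.V → H'.V}
    (hπ : Surjective π) (hG : H'.G = H.G.map π) (hlab : ∀ v, H'.lab (π v) = H.lab v)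
    {R' : H'.V → ℕ} (hR : ∀ v, R' (π v) = R v) : Realizes ξ H' pend n R' := by
  have hR' : R' ∘ π = R := funext hR
  refine ⟨h.wf, ?_, ?_, hπ.forall.2 fun v => ?_, hπ.forall.2 fun v => ?_,
    hπ.forall.2 fun v => ?_, h.pend_lt, hπ.forall.2 fun v => ?_, hπ.forall₂.2 fun v w => ?_⟩
  · rw [h.coe_verts, ← hR', hπ.range_comp]
  · rw [h.graph_eq, hG, map_map, hR']
  · rw [hR, hlab]
    exact h.pend_lab v
  · rw [hR, hlab]
    exact h.lab_of_pend_eq_none v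
  · rw [hR, hlab]
    exact h.title_of_pend v
  · rw [hR, hlab]
    exact h.le_title v
  · rw [hR, hR, hlab, hlab]
    exact fun hv hw hvw => congrArg π (h.injOn v w hv hw hvw)

theorem fuse (h : Realizes ξ H pend n R) {j : Fin k} {t : ℕ} (hj : pend j = some t)
    (hv : ∃ v, H.lab v = j) : Realizes ξ (H.fuse j) pend n fun x => x.elim t fun u => R u :=
  h.of_surjective (LGraph.fuseMap_surjective hv) LGraph.fuse_G LGraph.lab_fuseMap fun v => by
    unfold LGraph.fuseMap
    split
    · exact (h.title_of_pend v t (‹H.lab v = j› ▸ hj)).symm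
    · rfl

theorem of_update_pend {j : Fin k} (h : Realizes ξ H (update pend j (some n)) (n + 1) R)
    (hj : pend j = none) (hpend : ∀ x t, pend x = some t → t < n)
    (huniq : ∀ v w, H.lab v = j → H.lab w = j → v = w) : Realizes ξ H pend n R := by
  have hR : ∀ v, H.lab v = j → R v = n := fun v hv =>
    h.title_of_pend v n (by rw [hv, update_self])
  have hR' : ∀ v, pend (H.lab v) = none → H.lab v ≠ j → n + 1 ≤ R v := fun v hv hvj =>
    h.le_title v (by rwa [update_of_ne hvj])
  have hlab := fun v => eq_iff_and_apply_eq_of_update_eq hj (fun x hx => (hpend x n hx).false)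
    (h.pend_lab v)
  refine ⟨h.wf, h.coe_verts, h.graph_eq, fun v => (hlab v).2, fun v hv => ?_, fun v t hv => ?_,
    hpend, fun v hv => ?_, fun v w hv hw hvw => ?_⟩
  · by_cases hvj : H.lab v = j
    · rw [(hlab v).1.2 hvj, hvj]
    · exact h.lab_of_pend_eq_none v (by rwa [update_of_ne hvj])
  · have hvj : H.lab v ≠ j := fun e => by rw [e, hj] at hv; cases hv
    exact h.title_of_pend v t (by rwa [update_of_ne hvj])
  · by_cases hvj : H.lab v = j
    · exact (hR v hvj).ge
    · exact (hR' v hv hvj).trans' n.le_succ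
  · by_cases hvj : H.lab v = j <;> by_cases hwj : H.lab w = j
    · exact huniq v w hvj hwj
    · have := hR' w hw hwj
      rw [← hvw, hR v hvj] at this
      omega
    · have := hR' v hv hvj
      rw [hvw, hR w hwj] at this
      omega
    · exact h.injOn v w (by rwa [update_of_ne hvj]) (by rwa [update_of_ne hwj]) hvw

end Realizes

theorem realizes_intro (pend : Fin k → Option ℕ) {n : ℕ} (i : Fin k)
    (hpend : ∀ x t, pend x = some t → t < n) :
    Realizes (intro ((pend i).getD n) i) (FuseExpr.singleVertex i) pend n
      fun _ => (pend i).getD n where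
  wf := trivial
  coe_verts := (Finset.coe_singleton _).trans (Set.range_const (ι := PUnit)).symm
  graph_eq := by
    rw [graph_eval_intro]
    ext x y
    simp [map_adj', FuseExpr.singleVertex]
  pend_lab _ := rfl
  lab_of_pend_eq_none _ _ := rfl
  title_of_pend _ t ht := by simp [show pend i = some t from ht]
  pend_lt := hpend
  le_title _ hv := by simp [show pend i = none from hv]
  injOn _ _ _ _ _ := rfl

theorem exists_realizes (φ : FuseExpr k) (hφ : φ.WF) (pend : Fin k → Option ℕ) (n : ℕ)
    (hpend : ∀ x t, pend x = some t → t < n) : ∃ ξ R, Realizes ξ φ.eval pend n R := by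
  induction φ generalizing pend n with
  | intro i => exact ⟨_, _, realizes_intro pend i hpend⟩
  | union φ₁ φ₂ ih₁ ih₂ =>
    obtain ⟨ξ₁, R₁, h₁⟩ := ih₁ hφ.1 pend n hpend
    let n₂ := max n (ξ₁.eval.verts.sup id + 1)
    obtain ⟨ξ₂, R₂, h₂⟩ := ih₂ hφ.2 pend n₂ fun x t hx => (hpend x t hx).trans_le (le_max_left ..)
    obtain ⟨ξ, h⟩ := h₁.exists_glue h₂ (le_max_left ..) fun x hx =>
      (Nat.lt_succ_of_le (Finset.le_sup (f := id) hx)).trans_le (le_max_right ..)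
    exact ⟨ξ, _, h⟩
  | join a b φ ih =>
    obtain ⟨ξ, R, h⟩ := ih hφ.2 pend n hpend
    obtain ⟨ξ', h'⟩ := h.exists_join hφ.1
    exact ⟨ξ', R, h'⟩
  | relabel a b φ ih =>
    obtain ⟨ξ, R, h⟩ := ih hφ.2 _ n fun x t hx => hpend _ t hx
    exact ⟨_, R, h.relabel hφ.1 hpend⟩
  | fuse j φ ih =>
    obtain ⟨hφ, hj⟩ := hφ
    cases hpj : pend j with
    | some t =>
      obtain ⟨ξ, R, h⟩ := ih hφ pend n hpend
      exact ⟨ξ, _, h.fuse hpj hj⟩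
    | none =>
      -- the fused vertex gets the fresh title `n`
      have hpend' : ∀ x t, update pend j (some n) x = some t → t < n + 1 := fun x t hx => by
        by_cases hxj : x = j
        · rw [hxj, update_self, Option.some_inj] at hx
          omega
        · rw [update_of_ne hxj] at hx
          exact (hpend x t hx).trans n.lt_succ_self
      obtain ⟨ξ, R, h⟩ := ih hφ (update pend j (some n)) (n + 1) hpend'
      exact ⟨ξ, _, (h.fuse (update_self ..) hj).of_update_pend hpj hpend
        fun _ _ => LGraph.eq_of_fuse_lab_eq⟩

end GlueExpr

/-- For every fuse-`k`-expression `φ` there exists a glue-`k`-expression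
`ξ` whose value is label-preservingly isomorphic to the value of `φ`. -/
theorem exists_glue_expression {k : ℕ} (φ : FuseExpr k) (hwf : φ.WF) :
    ∃ ξ : GlueExpr k, ξ.WF ∧ ξ.eval.LIsoTo φ.eval := by
  obtain ⟨ξ, R, h⟩ := GlueExpr.exists_realizes φ hwf (fun _ => none) 0 fun _ _ => nofun
  exact ⟨ξ, h.wf, h.lIsoTo⟩
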